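/- If there exist an almost 2-perfect 8-cycle system of order r+1 and an almost 2-perfect 8-cycle decomposition of K_{r,s}, then there exists an almost 2-perfect 8-cycle decomposition of K_{r+s+1} \ K_{s+1} (the complete graph on r+s+1 vertices with the edges of a complete subgraph on s+1 specified vertices removed). -/

import Mathlib

open Finset

/-- The edge set of the closed walk visiting `f 0, f 1, ..., f (m-1)` and back to `f 0`. -/
def cycleEdges {V : Type*} [DecidableEq V] (m : ℕ) (f : ℕ → V) : Finset (Sym2 V) :=
  (Finset.range m).image (fun i => s(f i, f ((i + 1) % m)))

/-- `f` describes an `m`-cycle: its first `m` values are pairwise distinct. -/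
def IsCycleMap {V : Type*} (m : ℕ) (f : ℕ → V) : Prop :=
  Set.InjOn f ↑(Finset.range m)

/-- Vertex set of the cycle described by `f`. -/
def cycleVerts {V : Type*} [DecidableEq V] (m : ℕ) (f : ℕ → V) : Finset V :=
  (Finset.range m).image f

/-- `g` is an inside `m`-cycle of `f`: same vertex set and edge-disjoint. -/
def IsInsideOf {V : Type*} [DecidableEq V] (m : ℕ) (g f : ℕ → V) : Prop :=
  IsCycleMap m g ∧ cycleVerts m g = cycleVerts m f ∧
    Disjoint (cycleEdges m f) (cycleEdges m g)

/-- Edge set of the complete graph on `V`. -/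
def kEdges (V : Type*) [Fintype V] [DecidableEq V] : Finset (Sym2 V) :=
  Finset.univ.filter (fun e => ¬ e.IsDiag)

/-- Edge set of the complete bipartite graph `K_{r,s}`. -/
def bipEdges (r s : ℕ) : Finset (Sym2 (Fin r ⊕ Fin s)) :=
  (Finset.univ : Finset (Fin r × Fin s)).image (fun p => s(Sum.inl p.1, Sum.inr p.2))

/-- `E` admits an almost 2-perfect 8-cycle decomposition. -/
def HasA2PDecomp {V : Type*} [DecidableEq V] (E : Finset (Sym2 V)) : Prop :=
  ∃ (k : ℕ) (c c' : Fin k → ℕ → V),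
    (∀ i, IsCycleMap 8 (c i)) ∧
    (∀ i j, i ≠ j → Disjoint (cycleEdges 8 (c i)) (cycleEdges 8 (c j))) ∧
    Finset.univ.sup (fun i => cycleEdges 8 (c i)) = E ∧
    (∀ i, IsInsideOf 8 (c' i) (c i)) ∧
    (∀ i j, i ≠ j → Disjoint (cycleEdges 8 (c' i)) (cycleEdges 8 (c' j))) ∧
    Finset.univ.sup (fun i => cycleEdges 8 (c' i)) = E

/-- `E` admits an almost 2-perfect 8-cycle packing with leave `L`. -/
def HasA2PPacking {V : Type*} [DecidableEq V] (E L : Finset (Sym2 V)) : Prop :=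
  L ⊆ E ∧ ∃ (k : ℕ) (c c' : Fin k → ℕ → V),
    (∀ i, IsCycleMap 8 (c i)) ∧
    (∀ i j, i ≠ j → Disjoint (cycleEdges 8 (c i)) (cycleEdges 8 (c j))) ∧
    Finset.univ.sup (fun i => cycleEdges 8 (c i)) = E \ L ∧
    (∀ i, IsInsideOf 8 (c' i) (c i)) ∧
    (∀ i j, i ≠ j → Disjoint (cycleEdges 8 (c' i)) (cycleEdges 8 (c' j))) ∧
    Finset.univ.sup (fun i => cycleEdges 8 (c' i)) = E \ L

/-- A 1-factor (perfect matching) as a set of edges. -/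
def IsOneFactor {V : Type*} (L : Finset (Sym2 V)) : Prop :=
  (∀ e ∈ L, ¬ e.IsDiag) ∧ ∀ v : V, ∃! e, e ∈ L ∧ v ∈ e

/-! Put `K_{r+1}` on the vertices `0, …, r` and `K_{r,s}` on the parts `{0, …, r-1}` and
`{r+1, …, r+s}`. These two edge sets are disjoint and together form `K_{r+s+1}` with the hole on
`{r, …, r+s}` removed. Transporting both decompositions, together with their inside cycles, along
these injective vertex maps and concatenating them gives the required decomposition. -/

open Function

section DisjointCover

variable {ι α β : Type*} [Fintype ι] [DecidableEq α] [DecidableEq β]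

def IsDisjointCover (E : Finset α) (F : ι → Finset α) : Prop :=
  Pairwise (Disjoint on F) ∧ univ.sup F = E

theorem IsDisjointCover.subset {E : Finset α} {F : ι → Finset α} (h : IsDisjointCover E F)
    (i : ι) : F i ⊆ E :=
  h.2 ▸ le_sup (f := F) (mem_univ i)

theorem IsDisjointCover.image {E : Finset α} {F : ι → Finset α} (h : IsDisjointCover E F)
    {f : α → β} (hf : Injective f) : IsDisjointCover (E.image f) (fun i => (F i).image f) := by
  refine ⟨fun i j hij => (disjoint_image hf).2 (h.1 hij), ?_⟩
  simp only [← h.2, sup_eq_biUnion, biUnion_image]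

theorem IsDisjointCover.sumElim {κ : Type*} [Fintype κ] {E₁ E₂ : Finset α}
    {F₁ : ι → Finset α} {F₂ : κ → Finset α} (h₁ : IsDisjointCover E₁ F₁)
    (h₂ : IsDisjointCover E₂ F₂) (hE : Disjoint E₁ E₂) :
    IsDisjointCover (E₁ ∪ E₂) (Sum.elim F₁ F₂) := by
  refine ⟨?_, ?_⟩
  · rintro (i | i) (j | j) hij
    · exact h₁.1 (ne_of_apply_ne _ hij)
    · exact hE.mono (h₁.subset i) (h₂.subset j)
    · exact hE.symm.mono (h₂.subset i) (h₁.subset j)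
    · exact h₂.1 (ne_of_apply_ne _ hij)
  · rw [← h₁.2, ← h₂.2]
    exact sup_disjSum _ _ _

theorem IsDisjointCover.comp_equiv {κ : Type*} [Fintype κ] {E : Finset α} {F : ι → Finset α}
    (h : IsDisjointCover E F) (σ : κ ≃ ι) : IsDisjointCover E (F ∘ σ) :=
  ⟨h.1.comp_of_injective σ.injective, by rw [← h.2, ← map_univ_equiv σ, sup_map]; rfl⟩

end DisjointCover

theorem IsCycleMap.comp {V W : Type*} {e : V → W} (he : Injective e) {m : ℕ} {f : ℕ → V}
    (hf : IsCycleMap m f) : IsCycleMap m (e ∘ f) :=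
  he.injOn.comp hf (Set.mapsTo_univ _ _)

section Families

variable {V W : Type*} [DecidableEq V] [DecidableEq W]

theorem cycleEdges_comp (e : V → W) (m : ℕ) (f : ℕ → V) :
    cycleEdges m (e ∘ f) = (cycleEdges m f).image (Sym2.map e) := by
  simp [cycleEdges, image_image, comp_def]

theorem cycleVerts_comp (e : V → W) (m : ℕ) (f : ℕ → V) :
    cycleVerts m (e ∘ f) = (cycleVerts m f).image e := by
  simp [cycleVerts, image_image]

theorem IsInsideOf.comp {e : V → W} (he : Injective e) {m : ℕ} {g f : ℕ → V}
    (h : IsInsideOf m g f) : IsInsideOf m (e ∘ g) (e ∘ f) := by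
  obtain ⟨hg, hverts, hdisj⟩ := h
  refine ⟨hg.comp he, by rw [cycleVerts_comp, cycleVerts_comp, hverts], ?_⟩
  rw [cycleEdges_comp, cycleEdges_comp]
  exact (disjoint_image (Sym2.map.injective he)).2 hdisj

def IsA2PFamily {ι : Type*} [Fintype ι] (m : ℕ) (E : Finset (Sym2 V)) (c c' : ι → ℕ → V) :
    Prop :=
  (∀ i, IsCycleMap m (c i)) ∧ (∀ i, IsInsideOf m (c' i) (c i)) ∧
    IsDisjointCover E (fun i => cycleEdges m (c i)) ∧
    IsDisjointCover E (fun i => cycleEdges m (c' i))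

theorem HasA2PDecomp.exists_isA2PFamily {E : Finset (Sym2 V)} (h : HasA2PDecomp E) :
    ∃ (k : ℕ) (c c' : Fin k → ℕ → V), IsA2PFamily 8 E c c' := by
  obtain ⟨k, c, c', hc, hdisj, hcover, hinside, hdisj', hcover'⟩ := h
  exact ⟨k, c, c', hc, hinside, ⟨hdisj, hcover⟩, ⟨hdisj', hcover'⟩⟩

theorem IsA2PFamily.hasA2PDecomp {ι : Type*} [Fintype ι] {E : Finset (Sym2 V)}
    {c c' : ι → ℕ → V} (h : IsA2PFamily 8 E c c') : HasA2PDecomp E := by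
  obtain ⟨hc, hinside, hcover, hcover'⟩ := h
  let σ := (Fintype.equivFin ι).symm
  exact ⟨_, c ∘ σ, c' ∘ σ, fun i => hc _, (hcover.comp_equiv σ).1, (hcover.comp_equiv σ).2,
    fun i => hinside _, (hcover'.comp_equiv σ).1, (hcover'.comp_equiv σ).2⟩

variable {ι κ : Type*} [Fintype ι] [Fintype κ] {m : ℕ}

theorem IsA2PFamily.map {E : Finset (Sym2 V)} {c c' : ι → ℕ → V} (h : IsA2PFamily m E c c')
    {e : V → W} (he : Injective e) :
    IsA2PFamily m (E.image (Sym2.map e)) (fun i => e ∘ c i) (fun i => e ∘ c' i) := by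
  obtain ⟨hc, hinside, hcover, hcover'⟩ := h
  simp only [IsA2PFamily, cycleEdges_comp]
  exact ⟨fun i => (hc i).comp he, fun i => (hinside i).comp he,
    hcover.image (Sym2.map.injective he), hcover'.image (Sym2.map.injective he)⟩

theorem IsA2PFamily.sumElim {E₁ E₂ : Finset (Sym2 V)} {c₁ c₁' : ι → ℕ → V}
    {c₂ c₂' : κ → ℕ → V} (h₁ : IsA2PFamily m E₁ c₁ c₁') (h₂ : IsA2PFamily m E₂ c₂ c₂')
    (hE : Disjoint E₁ E₂) :
    IsA2PFamily m (E₁ ∪ E₂) (Sum.elim c₁ c₂) (Sum.elim c₁' c₂') := by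
  obtain ⟨hc₁, hinside₁, hcover₁, hcover₁'⟩ := h₁
  obtain ⟨hc₂, hinside₂, hcover₂, hcover₂'⟩ := h₂
  have edges_sumElim (d₁ : ι → ℕ → V) (d₂ : κ → ℕ → V) :
      (fun i => cycleEdges m (Sum.elim d₁ d₂ i)) =
        Sum.elim (fun i => cycleEdges m (d₁ i)) (fun i => cycleEdges m (d₂ i)) :=
    Sum.comp_elim (cycleEdges m) d₁ d₂
  refine ⟨Sum.rec hc₁ hc₂, Sum.rec hinside₁ hinside₂, ?_, ?_⟩
  · rw [edges_sumElim]; exact hcover₁.sumElim hcover₂ hE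
  · rw [edges_sumElim]; exact hcover₁'.sumElim hcover₂' hE

end Families

theorem HasA2PDecomp.image_union {V₁ V₂ W : Type*}
    [DecidableEq V₁] [DecidableEq V₂] [DecidableEq W] {E₁ : Finset (Sym2 V₁)}
    {E₂ : Finset (Sym2 V₂)} (h₁ : HasA2PDecomp E₁) (h₂ : HasA2PDecomp E₂)
    {e₁ : V₁ → W} {e₂ : V₂ → W} (he₁ : Injective e₁) (he₂ : Injective e₂)
    (hE : Disjoint (E₁.image (Sym2.map e₁)) (E₂.image (Sym2.map e₂))) :
    HasA2PDecomp (E₁.image (Sym2.map e₁) ∪ E₂.image (Sym2.map e₂)) := by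
  obtain ⟨k₁, c₁, c₁', hc₁⟩ := h₁.exists_isA2PFamily
  obtain ⟨k₂, c₂, c₂', hc₂⟩ := h₂.exists_isA2PFamily
  exact ((hc₁.map he₁).sumElim (hc₂.map he₂) hE).hasA2PDecomp

theorem mk_mem_image_kEdges_castLE {n N : ℕ} (h : n ≤ N) (a b : Fin N) :
    s(a, b) ∈ (kEdges (Fin n)).image (Sym2.map (Fin.castLE h)) ↔
      a ≠ b ∧ (a : ℕ) < n ∧ (b : ℕ) < n := by
  constructor
  · simp only [mem_image, kEdges, mem_filter, mem_univ, true_and]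
    rintro ⟨x, hx, hxab⟩
    induction x using Sym2.ind with
    | _ u v =>
      rw [Sym2.map_mk, Sym2.eq_iff] at hxab
      rcases hxab with ⟨rfl, rfl⟩ | ⟨rfl, rfl⟩ <;> simp [Fin.ext_iff] at hx ⊢ <;> omega
  · rintro ⟨hab, ha, hb⟩
    refine mem_image.2 ⟨s(⟨a, ha⟩, ⟨b, hb⟩), ?_, rfl⟩
    simpa [kEdges, Fin.ext_iff] using hab

def bipartiteEmbedding (r s : ℕ) : Fin r ⊕ Fin s → Fin (r + s + 1) :=
  Sum.elim (Fin.castLE (by omega)) (fun j => ⟨r + 1 + j, by omega⟩)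

theorem bipartiteEmbedding_injective (r s : ℕ) : Injective (bipartiteEmbedding r s) :=
  (Fin.castLE_injective _).sumElim (fun a b h => by simpa [Fin.ext_iff] using h)
    (fun a b h => by simp [Fin.ext_iff] at h; omega)

theorem mk_mem_image_bipEdges {r s : ℕ} (a b : Fin (r + s + 1)) :
    s(a, b) ∈ (bipEdges r s).image (Sym2.map (bipartiteEmbedding r s)) ↔
      ((a : ℕ) < r ∧ r + 1 ≤ b) ∨ ((b : ℕ) < r ∧ r + 1 ≤ a) := by
  simp only [bipEdges, image_image, mem_image, mem_univ, true_and, comp_def, Sym2.map_mk,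
    bipartiteEmbedding, Sum.elim_inl, Sum.elim_inr, Prod.exists, Sym2.eq_iff]
  constructor
  · rintro ⟨i, j, ⟨rfl, rfl⟩ | ⟨rfl, rfl⟩⟩ <;> simp
  · rintro (⟨ha, hb⟩ | ⟨hb, ha⟩)
    · exact ⟨⟨a, ha⟩, ⟨b - (r + 1), by omega⟩, Or.inl ⟨rfl, Fin.ext (by simp; omega)⟩⟩
    · exact ⟨⟨b, hb⟩, ⟨a - (r + 1), by omega⟩, Or.inr ⟨rfl, Fin.ext (by simp; omega)⟩⟩

theorem kEdges_sdiff_hole_eq (r s : ℕ) :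
    kEdges (Fin (r + s + 1)) \ (univ.filter (fun v : Fin (r + s + 1) => r ≤ v.val)).sym2 =
      (kEdges (Fin (r + 1))).image (Sym2.map (Fin.castLE (by omega))) ∪
        (bipEdges r s).image (Sym2.map (bipartiteEmbedding r s)) := by
  ext x
  induction x using Sym2.ind with
  | _ a b =>
    rw [mem_union, mk_mem_image_kEdges_castLE, mk_mem_image_bipEdges]
    simp only [mem_sdiff, kEdges, mem_filter, mem_univ, true_and, Sym2.mk_isDiag_iff,
      mk_mem_sym2_iff, Fin.ext_iff, ne_eq]
    omega

theorem disjoint_image_kEdges_image_bipEdges (r s : ℕ) :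
    Disjoint ((kEdges (Fin (r + 1))).image (Sym2.map (Fin.castLE (by omega))))
      ((bipEdges r s).image (Sym2.map (bipartiteEmbedding r s))) := by
  rw [disjoint_left]
  intro x
  induction x using Sym2.ind with
  | _ a b =>
    rw [mk_mem_image_kEdges_castLE, mk_mem_image_bipEdges]
    omega

/-- From an A2P 8-cycle system of order `r+1` and an A2P decomposition of `K_{r,s}`,
one gets an A2P 8-cycle decomposition of `K_{r+s+1}` minus a hole `K_{s+1}`. -/
theorem a2p_hole (r s : ℕ)
    (h1 : HasA2PDecomp (kEdges (Fin (r + 1))))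
    (h2 : HasA2PDecomp (bipEdges r s)) :
    HasA2PDecomp ((kEdges (Fin (r + s + 1))) \
      ((Finset.univ.filter (fun v : Fin (r + s + 1) => r ≤ v.val)).sym2) ) := by
  rw [kEdges_sdiff_hole_eq]
  exact h1.image_union h2 (Fin.castLE_injective _) (bipartiteEmbedding_injective r s)
    (disjoint_image_kEdges_image_bipEdges r s)
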